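/- Let S be the set of probability densities s on ℝ (with respect to Lebesgue measure λ) that are monotone on a half-line and vanish elsewhere, i.e. for some a ∈ ℝ, either s is nonincreasing on [a,+∞) and s = 0 on (−∞,a), or s is nondecreasing on (−∞,a] and s = 0 on (a,+∞). For d ≥ 1, let S_d be the set of densities in S that are constant on each element of some partition of ℝ into at most d+2 intervals. For M ≥ 0, let S(M) be the set of densities s ∈ S vanishing outside some compact interval I_s and satisfying λ(I_s)·[sup_{I_s} s − inf_{I_s} s] ≤ M. Then for every s ∈ S(M) and every d ≥ 1, the squared Hellinger distance from s to S_d satisfies inf_{t∈S_d} h²(s·λ, t·λ) ≤ min(M/(4d²), 1). -/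

import Mathlib

/-!
Reflecting through `0` if necessary, `s` is nonincreasing on `[a, ∞)`, vanishes outside `[a, b]`,
and `(b - a) (s a - s b) ≤ M`. Cut `[a, b]` where `√s` crosses `d + 1` equally spaced levels from
`√(s a)` down to `√(s b)`, and let `t` be the histogram of `s` on the `d` resulting cells. Then `t`
is again a nonincreasing density, constant on `d + 2` intervals, so `t ∈ S_d`. On each cell `J`,
`√s` oscillates by at most `Δ = (√(s a) - √(s b)) / d`, and
`∫_J (√s - √(avg_J s))² ≤ 2 |J| Var_J(√s) ≤ |J| Δ² / 2` by Popoviciu's inequality. Summing over the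
cells, `h²(s, t) ≤ (b - a) Δ² / 4 ≤ (b - a) (s a - s b) / (4 d²) ≤ M / (4 d²)`, as
`(√u - √v)² ≤ u - v`. The bound `1` holds for any two densities, since `(√s - √t)² ≤ s + t`.
-/

open MeasureTheory

/-- `S`: the set of probability densities on `ℝ` (w.r.t. Lebesgue measure) that are
monotone on a half-line and vanish elsewhere. -/
def IsHalfLineMonotoneDensity (s : ℝ → ℝ) : Prop :=
  (∀ x, 0 ≤ s x) ∧ (∫ x : ℝ, s x = 1) ∧
  ∃ a : ℝ, (AntitoneOn s (Set.Ici a) ∧ ∀ x, x < a → s x = 0) ∨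
    (MonotoneOn s (Set.Iic a) ∧ ∀ x, a < x → s x = 0)

/-- `S_d`: densities of `S` that are constant on each element of some partition of `ℝ`
into at most `d + 2` intervals. -/
def MemSd (d : ℕ) (s : ℝ → ℝ) : Prop :=
  IsHalfLineMonotoneDensity s ∧
  ∃ (k : ℕ) (I : Fin k → Set ℝ), k ≤ d + 2 ∧
    (∀ j, (I j).OrdConnected) ∧
    (Pairwise fun i j => Disjoint (I i) (I j)) ∧
    (⋃ j, I j) = Set.univ ∧
    ∀ j, ∃ c : ℝ, ∀ x ∈ I j, s x = c

/-- `S(M)`: densities of `S` vanishing outside some compact interval `I_s = [a,b]` and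
with `λ(I_s)·[sup_{I_s} s − inf_{I_s} s] ≤ M`. -/
def MemSM (M : ℝ) (s : ℝ → ℝ) : Prop :=
  IsHalfLineMonotoneDensity s ∧
  ∃ a b : ℝ, a ≤ b ∧ (∀ x ∉ Set.Icc a b, s x = 0) ∧
    (b - a) * (sSup (s '' Set.Icc a b) - sInf (s '' Set.Icc a b)) ≤ M

open Set

noncomputable def hellingerSq (s t : ℝ → ℝ) : ℝ := 1 / 2 * ∫ x, (√(s x) - √(t x)) ^ 2

lemma hellingerSq_nonneg (s t : ℝ → ℝ) : 0 ≤ hellingerSq s t :=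
  mul_nonneg (by norm_num) (integral_nonneg fun _ => sq_nonneg _)

lemma sq_sqrt_sub_sqrt_le_add {a b : ℝ} (ha : 0 ≤ a) (hb : 0 ≤ b) : (√a - √b) ^ 2 ≤ a + b := by
  nlinarith [Real.sq_sqrt ha, Real.sq_sqrt hb, Real.sqrt_nonneg a, Real.sqrt_nonneg b,
    mul_nonneg (Real.sqrt_nonneg a) (Real.sqrt_nonneg b)]

lemma integrable_sq_sqrt_sub_sqrt {α : Type*} {mα : MeasurableSpace α} {μ : Measure α}
    {s t : α → ℝ} (hs : Integrable s μ) (ht : Integrable t μ) (hs0 : 0 ≤ᵐ[μ] s)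
    (ht0 : 0 ≤ᵐ[μ] t) : Integrable (fun x => (√(s x) - √(t x)) ^ 2) μ := by
  refine (hs.add ht).mono' ?_ ?_
  · exact ((Real.continuous_sqrt.comp_aestronglyMeasurable hs.1).sub
      (Real.continuous_sqrt.comp_aestronglyMeasurable ht.1)).pow 2
  · filter_upwards [hs0, ht0] with x hsx htx
    rw [Real.norm_of_nonneg (sq_nonneg _)]
    exact sq_sqrt_sub_sqrt_le_add hsx htx

lemma hellingerSq_le_one {s t : ℝ → ℝ} (hs0 : ∀ x, 0 ≤ s x) (ht0 : ∀ x, 0 ≤ t x)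
    (hs : ∫ x, s x = 1) (ht : ∫ x, t x = 1) : hellingerSq s t ≤ 1 := by
  have hs_int : Integrable s := .of_integral_ne_zero (by simp [hs])
  have ht_int : Integrable t := .of_integral_ne_zero (by simp [ht])
  have := integral_mono_of_nonneg (.of_forall fun x => sq_nonneg _) (hs_int.add ht_int)
    (.of_forall fun x => sq_sqrt_sub_sqrt_le_add (hs0 x) (ht0 x))
  rw [integral_add' hs_int ht_int, hs, ht] at this
  rw [hellingerSq]
  linarith

lemma sq_sqrt_sub_sqrt_le_sub {u v : ℝ} (hv : 0 ≤ v) (hvu : v ≤ u) : (√u - √v) ^ 2 ≤ u - v := by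
  have h := Real.sqrt_le_sqrt hvu
  nlinarith [Real.sq_sqrt hv, Real.sq_sqrt (hv.trans hvu), Real.sqrt_nonneg v,
    mul_le_mul_of_nonneg_left h (Real.sqrt_nonneg v)]

section SqrtAverage

variable {Ω : Type*} {mΩ : MeasurableSpace Ω} {μ : Measure Ω} {f : Ω → ℝ} {lo hi : ℝ}

open ProbabilityTheory in
lemma integral_sq_sqrt_sub_sqrt_integral_le [IsProbabilityMeasure μ] (hf : AEMeasurable f μ)
    (hf0 : 0 ≤ᵐ[μ] f) (hbd : ∀ᵐ x ∂μ, √(f x) ∈ Icc lo hi) :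
    ∫ x, (√(f x) - √(∫ x, f x ∂μ)) ^ 2 ∂μ ≤ (hi - lo) ^ 2 / 2 := by
  set g : Ω → ℝ := fun x => √(f x)
  have hgm : AEMeasurable g μ := Real.continuous_sqrt.measurable.comp_aemeasurable hf
  have hg : MemLp g 2 μ := memLp_of_bounded hbd hgm.aestronglyMeasurable 2
  have hg_int : Integrable g μ := hg.integrable one_le_two
  have hg_sq : ∫ x, g x ^ 2 ∂μ = ∫ x, f x ∂μ :=
    integral_congr_ae (hf0.mono fun x hx => Real.sq_sqrt hx)
  set A := ∫ x, f x ∂μ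
  set B := ∫ x, g x ∂μ
  have hvar : variance g μ = A - B ^ 2 := by rw [variance_eq_sub hg, ← hg_sq]; rfl
  have hB : 0 ≤ B := integral_nonneg fun x => Real.sqrt_nonneg _
  have hBA : B ≤ √A := Real.le_sqrt_of_sq_le (by linarith [variance_nonneg g μ])
  have hA : √A ^ 2 = A := Real.sq_sqrt (integral_nonneg_of_ae hf0)
  have hexpand : ∫ x, (g x - √A) ^ 2 ∂μ = 2 * A - 2 * √A * B := by
    have : ∀ x, (g x - √A) ^ 2 = g x ^ 2 - 2 * √A * g x + √A ^ 2 := fun x => by ring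
    simp_rw [this]
    have hint : Integrable (fun x => g x ^ 2 - 2 * √A * g x) μ :=
      hg.integrable_sq.sub (hg_int.const_mul _)
    rw [integral_add hint (integrable_const _),
      integral_sub hg.integrable_sq (hg_int.const_mul _), integral_const_mul, hg_sq,
      integral_const, probReal_univ, one_smul, hA]
    ring
  rw [hexpand]
  calc 2 * A - 2 * √A * B ≤ 2 * (A - B ^ 2) := by nlinarith
    _ = 2 * variance g μ := by rw [hvar]
    _ ≤ 2 * ((hi - lo) / 2) ^ 2 := by gcongr; exact variance_le_sq_of_bounded hbd hgm
    _ = (hi - lo) ^ 2 / 2 := by ring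

lemma integral_sq_sqrt_sub_sqrt_average_le [IsFiniteMeasure μ] (hf : AEMeasurable f μ)
    (hf0 : 0 ≤ᵐ[μ] f) (hbd : ∀ᵐ x ∂μ, √(f x) ∈ Icc lo hi) :
    ∫ x, (√(f x) - √(⨍ x, f x ∂μ)) ^ 2 ∂μ ≤ μ.real univ * ((hi - lo) ^ 2 / 2) := by
  rcases eq_zero_or_neZero μ with rfl | _
  · simp
  rw [← measure_smul_average, smul_eq_mul, average_eq' μ f, average_eq']
  gcongr
  exact integral_sq_sqrt_sub_sqrt_integral_le (hf.smul_measure _)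
    (Measure.ae_smul_measure hf0 _) (Measure.ae_smul_measure hbd _)

end SqrtAverage

lemma intervalIntegral_sq_sqrt_sub_sqrt_average_le {f : ℝ → ℝ} {u v lo hi : ℝ} (huv : u ≤ v)
    (hf : AEMeasurable f) (hf0 : ∀ x ∈ Ioo u v, 0 ≤ f x)
    (hbd : ∀ x ∈ Ioo u v, √(f x) ∈ Icc lo hi) :
    ∫ x in u..v, (√(f x) - √(⨍ x in u..v, f x)) ^ 2 ≤ (v - u) * ((hi - lo) ^ 2 / 2) := by
  have hIoo : volume.restrict (Ioo u v) = volume.restrict (Ioc u v) :=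
    Measure.restrict_congr_set Ioo_ae_eq_Ioc
  have key := integral_sq_sqrt_sub_sqrt_average_le (μ := volume.restrict (Ioc u v)) hf.restrict
    (hIoo ▸ ae_restrict_of_forall_mem measurableSet_Ioo hf0)
    (hIoo ▸ ae_restrict_of_forall_mem measurableSet_Ioo hbd)
  rwa [measureReal_restrict_apply_univ, Real.volume_real_Ioc_of_le huv,
    ← intervalIntegral.integral_of_le huv, ← uIoc_of_le huv] at key

lemma integral_eq_sum_intervalIntegral {F : ℝ → ℝ} {y : ℕ → ℝ} {d : ℕ} (hy : y 0 ≤ y d)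
    (hF : Integrable F) (hF0 : ∀ x ∉ Icc (y 0) (y d), F x = 0) :
    ∫ x, F x = ∑ i ∈ Finset.range d, ∫ x in y i..y (i + 1), F x := by
  rw [intervalIntegral.sum_integral_adjacent_intervals fun _ _ => hF.intervalIntegrable,
    intervalIntegral.integral_of_le hy, ← integral_Icc_eq_integral_Ioc,
    setIntegral_eq_integral_of_forall_compl_eq_zero hF0]

lemma intervalAverage_nonneg {f : ℝ → ℝ} (hf : ∀ x, 0 ≤ f x) (u v : ℝ) :
    0 ≤ ⨍ x in u..v, f x := by
  rw [setAverage_eq]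
  exact smul_nonneg (inv_nonneg.2 measureReal_nonneg)
    (setIntegral_nonneg measurableSet_uIoc fun x _ => hf x)

lemma sub_mul_intervalAverage (f : ℝ → ℝ) (u v : ℝ) :
    (v - u) * ⨍ x in u..v, f x = ∫ x in u..v, f x := by
  rcases eq_or_ne u v with rfl | huv
  · simp
  · rw [interval_average_eq_div, mul_div_cancel₀ _ (sub_ne_zero.2 huv.symm)]

lemma AntitoneOn.intervalAverage_mem_Icc {f : ℝ → ℝ} {u v : ℝ} (huv : u < v)
    (hf : AntitoneOn f (Icc u v)) : ⨍ x in u..v, f x ∈ Icc (f v) (f u) := by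
  have hint : IntervalIntegrable f volume u v := (uIcc_of_le huv.le ▸ hf).intervalIntegrable
  have hlen : 0 < v - u := sub_pos.2 huv
  rw [interval_average_eq_div, mem_Icc, le_div_iff₀ hlen, div_le_iff₀ hlen]
  constructor
  · calc f v * (v - u) = ∫ _ in u..v, f v := by simp [mul_comm]
      _ ≤ ∫ x in u..v, f x := intervalIntegral.integral_mono_on huv.le
          intervalIntegrable_const hint fun x hx => hf hx ⟨huv.le, le_rfl⟩ hx.2
  · calc ∫ x in u..v, f x ≤ ∫ _ in u..v, f u := intervalIntegral.integral_mono_on huv.le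
          hint intervalIntegrable_const fun x hx => hf ⟨le_rfl, huv.le⟩ hx hx.1
      _ = f u * (v - u) := by simp [mul_comm]

lemma AntitoneOn.comp_neg {α β : Type*} [AddCommGroup α] [PartialOrder α] [IsOrderedAddMonoid α]
    [Preorder β] {f : α → β} {S : Set α} (h : AntitoneOn f S) :
    MonotoneOn (fun x => f (-x)) (-S) :=
  fun _ hx _ hy hxy => h hy hx (neg_le_neg hxy)

lemma MonotoneOn.comp_neg {α β : Type*} [AddCommGroup α] [PartialOrder α] [IsOrderedAddMonoid α]
    [Preorder β] {f : α → β} {S : Set α} (h : MonotoneOn f S) :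
    AntitoneOn (fun x => f (-x)) (-S) :=
  fun _ hx _ hy hxy => h hy hx (neg_le_neg hxy)

lemma IsHalfLineMonotoneDensity.comp_neg {s : ℝ → ℝ} (hs : IsHalfLineMonotoneDensity s) :
    IsHalfLineMonotoneDensity (fun x => s (-x)) := by
  obtain ⟨hs0, hs1, a, (⟨hanti, hzero⟩ | ⟨hmono, hzero⟩)⟩ := hs
  all_goals refine ⟨fun x => hs0 (-x), (integral_neg_eq_self s _).trans hs1, -a, ?_⟩
  · exact .inr ⟨by simpa using hanti.comp_neg, fun x hx => hzero _ (by linarith)⟩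
  · exact .inl ⟨by simpa using hmono.comp_neg, fun x hx => hzero _ (by linarith)⟩

lemma MemSd.comp_neg {d : ℕ} {t : ℝ → ℝ} (ht : MemSd d t) : MemSd d (fun x => t (-x)) := by
  obtain ⟨ht, k, I, hk, hconn, hdisj, hunion, hconst⟩ := ht
  refine ⟨ht.comp_neg, k, fun j => Neg.neg ⁻¹' I j, hk,
    fun j => (hconn j).preimage_anti monotone_id.neg, fun i j hij => (hdisj hij).preimage _,
    by rw [← preimage_iUnion, hunion, preimage_univ],
    fun j => ?_⟩
  obtain ⟨c, hc⟩ := hconst j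
  exact ⟨c, fun x hx => hc _ hx⟩

lemma MemSM.comp_neg {M : ℝ} {s : ℝ → ℝ} (hs : MemSM M s) : MemSM M (fun x => s (-x)) := by
  obtain ⟨hs, a, b, hab, hsupp, hM⟩ := hs
  have himage : (fun x => s (-x)) '' Icc (-b) (-a) = s '' Icc a b := by
    rw [← image_neg_Icc, image_image]; simp only [neg_neg]
  refine ⟨hs.comp_neg, -b, -a, neg_le_neg hab, fun x hx => hsupp _ fun h => hx ?_, ?_⟩
  · exact ⟨by linarith [h.2], by linarith [h.1]⟩
  · rw [himage, neg_sub_neg]; exact hM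

lemma hellingerSq_comp_neg (s t : ℝ → ℝ) :
    hellingerSq (fun x => s (-x)) (fun x => t (-x)) = hellingerSq s t := by
  rw [hellingerSq, hellingerSq, integral_neg_eq_self (fun x => (√(s x) - √(t x)) ^ 2)]

lemma exists_monotone_levelPartition {g : ℝ → ℝ} {p q : ℝ} {c : ℕ → ℝ} {d : ℕ} (hd : d ≠ 0)
    (hpq : p ≤ q) (hg : AntitoneOn g (Icc p q)) (hc : Antitone c) (hp : g p ≤ c 0)
    (hq : c d = g q) :
    ∃ y : ℕ → ℝ, Monotone y ∧ y 0 = p ∧ y d = q ∧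
      ∀ i < d, ∀ x ∈ Ioo (y i) (y (i + 1)), g x ∈ Icc (c (i + 1)) (c i) := by
  set A : ℕ → Set ℝ := fun i => {x ∈ Icc p q | g x ≤ c i}
  have hqA : ∀ i ≤ d, q ∈ A i := fun i hi => ⟨⟨hpq, le_rfl⟩, hq ▸ hc hi⟩
  have hA_bdd : ∀ i, BddBelow (A i) := fun i => ⟨p, fun x hx => hx.1.1⟩
  set y : ℕ → ℝ := fun i => if i < d then sInf (A i) else q
  have hy_lt : ∀ i < d, y i = sInf (A i) := fun i hi => if_pos hi
  have hy_le : ∀ i, y i ≤ q := fun i => by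
    by_cases hi : i < d
    · rw [hy_lt i hi]; exact csInf_le (hA_bdd i) (hqA i hi.le)
    · exact (if_neg hi).le
  refine ⟨y, monotone_nat_of_le_succ fun i => ?_, ?_, if_neg (lt_irrefl d), ?_⟩
  · by_cases hi : i + 1 < d
    · rw [hy_lt i (by omega), hy_lt (i + 1) hi]
      exact csInf_le_csInf (hA_bdd i) ⟨q, hqA (i + 1) hi.le⟩
        fun x hx => ⟨hx.1, hx.2.trans (hc i.le_succ)⟩
    · exact (hy_le i).trans (if_neg hi).ge
  · rw [hy_lt 0 (Nat.pos_of_ne_zero hd)]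
    exact IsLeast.csInf_eq ⟨⟨⟨le_rfl, hpq⟩, hp⟩, fun x hx => hx.1.1⟩
  intro i hi x hx
  obtain ⟨w, hwA, hwx⟩ := exists_lt_of_csInf_lt ⟨q, hqA i hi.le⟩ (hy_lt i hi ▸ hx.1)
  have hxI : x ∈ Icc p q := ⟨hwA.1.1.trans hwx.le, hx.2.le.trans (hy_le _)⟩
  refine ⟨?_, (hg hwA.1 hxI hwx.le).trans hwA.2⟩
  by_cases hi' : i + 1 < d
  · by_contra! hlt
    exact (csInf_le (hA_bdd _) ⟨hxI, hlt.le⟩).not_gt (hy_lt _ hi' ▸ hx.2)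
  · rw [show i + 1 = d by omega, hq]
    exact hg hxI ⟨hpq, le_rfl⟩ hxI.2

lemma exists_partition_of_constantOn_Ico {t : ℝ → ℝ} {y : ℕ → ℝ} {d : ℕ} (hy : Monotone y)
    (hout : ∀ x ∉ Ico (y 0) (y d), t x = 0)
    (hpiece : ∀ i < d, ∃ c, ∀ x ∈ Ico (y i) (y (i + 1)), t x = c) :
    ∃ I : Fin (d + 2) → Set ℝ, (∀ j, (I j).OrdConnected) ∧
      (Pairwise fun i j => Disjoint (I i) (I j)) ∧ (⋃ j, I j) = univ ∧
      ∀ j, ∃ c, ∀ x ∈ I j, t x = c := by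
  set I : Fin (d + 2) → Set ℝ := fun j =>
    (if (j : ℕ) = 0 then univ else Ici (y (j - 1))) ∩ (if (j : ℕ) = d + 1 then univ else Iio (y j))
  have hI : ∀ j : Fin (d + 2), (j : ℕ) ≠ 0 → (j : ℕ) ≠ d + 1 → I j = Ico (y (j - 1)) (y j) :=
    fun j h0 hd => by simp only [I, if_neg h0, if_neg hd, Ici_inter_Iio]
  have hdisj : ∀ i j : Fin (d + 2), i < j → Disjoint (I i) (I j) := by
    intro i j hij
    have hi : (i : ℕ) ≠ d + 1 := by omega
    have hj : (j : ℕ) ≠ 0 := by omega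
    refine disjoint_left.2 fun x hxi hxj => ?_
    have h1 : x < y i := by simpa only [I, if_neg hi, mem_Iio] using hxi.2
    have h2 : y (j - 1) ≤ x := by simpa only [I, if_neg hj, mem_Ici] using hxj.1
    exact (h2.trans_lt h1).not_ge (hy (by omega))
  refine ⟨I, fun j => ?_, fun i j hij => ?_, eq_univ_of_forall fun x => mem_iUnion.2 ?_,
    fun j => ?_⟩
  · simp only [I]; split_ifs <;> infer_instance
  · rcases hij.lt_or_gt with h | h
    · exact hdisj i j h
    · exact (hdisj j i h).symm
  · by_cases h0 : x < y 0
    · exact ⟨0, by simp [I, h0]⟩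
    by_cases hd : y d ≤ x
    · exact ⟨Fin.last (d + 1), by simp [I, hd]⟩
    obtain ⟨i, hi, hx⟩ := mem_iUnion₂.1 (Ico_subset_biUnion_Ico d y ⟨not_lt.1 h0, not_le.1 hd⟩)
    have hi : i < d := Finset.mem_range.1 hi
    exact ⟨⟨i + 1, by omega⟩, by rw [hI _ (by simp) (by simp; omega)]; simpa using hx⟩
  · by_cases h0 : (j : ℕ) = 0
    · exact ⟨0, fun x hx => hout x fun h => (h.1.trans_lt (by simpa [I, h0] using hx.2)).false⟩
    by_cases hd : (j : ℕ) = d + 1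
    · exact ⟨0, fun x hx => hout x fun h => (h.2.trans_le (by simpa [I, hd] using hx.1)).false⟩
    obtain ⟨k, hk⟩ := Nat.exists_eq_add_one_of_ne_zero h0
    obtain ⟨c, hc⟩ := hpiece k (by omega)
    refine ⟨c, fun x hx => hc x ?_⟩
    rwa [hI j h0 hd, hk, Nat.add_sub_cancel] at hx

noncomputable def stepFunction (y m : ℕ → ℝ) (d : ℕ) (x : ℝ) : ℝ :=
  ∑ i ∈ Finset.range d, (Ico (y i) (y (i + 1))).indicator (fun _ => m i) x

section stepFunction

variable {y m : ℕ → ℝ} {d : ℕ}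

lemma stepFunction_eq_of_mem (hy : Monotone y) {i : ℕ} (hi : i < d) {x : ℝ}
    (hx : x ∈ Ico (y i) (y (i + 1))) : stepFunction y m d x = m i := by
  rw [stepFunction, Finset.sum_eq_single_of_mem i (Finset.mem_range.2 hi), indicator_of_mem hx]
  intro j _ hji
  refine indicator_of_notMem (fun hxj => ?_) _
  rcases hji.lt_or_gt with h | h
  · exact (hxj.2.trans_le (hy h)).not_ge hx.1
  · exact (hx.2.trans_le (hy h)).not_ge hxj.1

lemma stepFunction_eq_zero_of_notMem (hy : Monotone y) {x : ℝ} (hx : x ∉ Ico (y 0) (y d)) :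
    stepFunction y m d x = 0 := by
  refine Finset.sum_eq_zero fun i hi => indicator_of_notMem (fun hxi => hx ?_) _
  exact ⟨(hy i.zero_le).trans hxi.1, hxi.2.trans_le (hy (Finset.mem_range.1 hi))⟩

lemma stepFunction_nonneg (hm : ∀ i, 0 ≤ m i) (x : ℝ) : 0 ≤ stepFunction y m d x :=
  Finset.sum_nonneg fun i _ => indicator_nonneg (fun _ _ => hm i) x

lemma integrable_stepFunction : Integrable (stepFunction y m d) := by
  unfold stepFunction
  exact integrable_finsetSum _ fun i _ =>
    (integrable_indicator_iff measurableSet_Ico).2 (integrableOn_const measure_Ico_lt_top.ne)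

lemma intervalIntegral_stepFunction (hy : Monotone y) {i : ℕ} (hi : i < d) :
    ∫ x in y i..y (i + 1), stepFunction y m d x = (y (i + 1) - y i) * m i := by
  rw [intervalIntegral.integral_congr_Ioo_of_le (hy i.le_succ)
    fun x hx => stepFunction_eq_of_mem hy hi (Ioo_subset_Ico_self hx)]
  simp

end stepFunction

noncomputable def stepAverage (s : ℝ → ℝ) (y : ℕ → ℝ) (d : ℕ) : ℝ → ℝ :=
  stepFunction y (fun i => ⨍ x in y i..y (i + 1), s x) d

section stepAverage

variable {s : ℝ → ℝ} {y : ℕ → ℝ} {d : ℕ}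

lemma stepAverage_nonneg (hs0 : ∀ x, 0 ≤ s x) (x : ℝ) : 0 ≤ stepAverage s y d x :=
  stepFunction_nonneg (fun _ => intervalAverage_nonneg hs0 _ _) x

lemma integrable_stepAverage : Integrable (stepAverage s y d) := integrable_stepFunction

lemma integral_stepAverage (hy : Monotone y) (hs : Integrable s)
    (hsupp : ∀ x ∉ Icc (y 0) (y d), s x = 0) : ∫ x, stepAverage s y d x = ∫ x, s x := by
  have hout : ∀ x ∉ Icc (y 0) (y d), stepAverage s y d x = 0 := fun x hx =>
    stepFunction_eq_zero_of_notMem hy fun h => hx (Ico_subset_Icc_self h)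
  rw [integral_eq_sum_intervalIntegral (hy d.zero_le) integrable_stepAverage hout,
    integral_eq_sum_intervalIntegral (hy d.zero_le) hs hsupp]
  refine Finset.sum_congr rfl fun i hi => ?_
  rw [stepAverage, intervalIntegral_stepFunction hy (Finset.mem_range.1 hi),
    sub_mul_intervalAverage]

lemma antitoneOn_stepAverage (hy : Monotone y) (hs0 : ∀ x, 0 ≤ s x)
    (hs : AntitoneOn s (Ici (y 0))) : AntitoneOn (stepAverage s y d) (Ici (y 0)) := by
  have hpiece : ∀ i < d, ∀ x ∈ Ico (y i) (y (i + 1)),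
      stepAverage s y d x ∈ Icc (s (y (i + 1))) (s (y i)) := by
    intro i hi x hx
    rw [stepAverage, stepFunction_eq_of_mem hy hi hx]
    exact AntitoneOn.intervalAverage_mem_Icc (hx.1.trans_lt hx.2)
      (hs.mono (Icc_subset_Ici_self.trans (Ici_subset_Ici.2 (hy i.zero_le))))
  have hmem : ∀ x, y 0 ≤ x → x < y d → ∃ i < d, x ∈ Ico (y i) (y (i + 1)) := fun x h0 hd => by
    obtain ⟨i, hi, hx⟩ := mem_iUnion₂.1 (Ico_subset_biUnion_Ico d y ⟨h0, hd⟩)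
    exact ⟨i, Finset.mem_range.1 hi, hx⟩
  intro p hp q hq hpq
  by_cases hqd : y d ≤ q
  · rw [stepAverage, stepFunction_eq_zero_of_notMem hy fun h => hqd.not_gt h.2]
    exact stepAverage_nonneg hs0 p
  obtain ⟨j, hj, hqj⟩ := hmem q hq (not_le.1 hqd)
  obtain ⟨i, hi, hpi⟩ := hmem p hp (hpq.trans_lt (not_le.1 hqd))
  rcases lt_trichotomy i j with hij | rfl | hji
  · calc stepAverage s y d q ≤ s (y j) := (hpiece j hj q hqj).2
      _ ≤ s (y (i + 1)) := hs (hy (i + 1).zero_le) (hy j.zero_le) (hy hij)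
      _ ≤ stepAverage s y d p := (hpiece i hi p hpi).1
  · rw [stepAverage, stepFunction_eq_of_mem hy hi hpi, stepFunction_eq_of_mem hy hi hqj]
  · exact absurd ((hqj.2.trans_le (hy hji)).trans_le hpi.1) hpq.not_gt

lemma memSd_stepAverage (hy : Monotone y) (hs0 : ∀ x, 0 ≤ s x) (hs1 : ∫ x, s x = 1)
    (hs : AntitoneOn s (Ici (y 0))) (hsupp : ∀ x ∉ Icc (y 0) (y d), s x = 0) :
    MemSd d (stepAverage s y d) := by
  obtain ⟨I, hconn, hdisj, hunion, hconst⟩ :=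
    exists_partition_of_constantOn_Ico (t := stepAverage s y d) hy
    (fun x hx => stepFunction_eq_zero_of_notMem hy hx)
    fun i hi => ⟨_, fun x hx => stepFunction_eq_of_mem hy hi hx⟩
  refine ⟨⟨stepAverage_nonneg hs0, ?_, y 0, .inl ⟨antitoneOn_stepAverage hy hs0 hs, ?_⟩⟩,
    d + 2, I, le_rfl, hconn, hdisj, hunion, hconst⟩
  · rw [integral_stepAverage hy (.of_integral_ne_zero (by simp [hs1])) hsupp, hs1]
  · exact fun x hx => stepFunction_eq_zero_of_notMem hy fun h => hx.not_ge h.1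

lemma hellingerSq_stepAverage_le (hy : Monotone y) (hs0 : ∀ x, 0 ≤ s x) (hs : Integrable s)
    (hsupp : ∀ x ∉ Icc (y 0) (y d), s x = 0) {Δ : ℝ}
    (hosc : ∀ i < d, ∃ lo, ∀ x ∈ Ioo (y i) (y (i + 1)), √(s x) ∈ Icc lo (lo + Δ)) :
    hellingerSq s (stepAverage s y d) ≤ (y d - y 0) * Δ ^ 2 / 4 := by
  have hG := integrable_sq_sqrt_sub_sqrt hs integrable_stepAverage (ae_of_all _ hs0)
    (ae_of_all _ (stepAverage_nonneg hs0 (y := y) (d := d)))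
  have hGout : ∀ x ∉ Icc (y 0) (y d), (√(s x) - √(stepAverage s y d x)) ^ 2 = 0 := fun x hx => by
    rw [hsupp x hx, stepAverage,
      stepFunction_eq_zero_of_notMem hy fun h => hx (Ico_subset_Icc_self h)]
    simp
  have hpiece : ∀ i < d,
      ∫ x in y i..y (i + 1), (√(s x) - √(stepAverage s y d x)) ^ 2 ≤
        (y (i + 1) - y i) * (Δ ^ 2 / 2) := by
    intro i hi
    obtain ⟨lo, hlo⟩ := hosc i hi
    rw [intervalIntegral.integral_congr_Ioo_of_le (hy i.le_succ)
      (g := fun x => (√(s x) - √(⨍ x in y i..y (i + 1), s x)) ^ 2) fun x hx => by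
      simp only [stepAverage, stepFunction_eq_of_mem hy hi (Ioo_subset_Ico_self hx)]]
    simpa using intervalIntegral_sq_sqrt_sub_sqrt_average_le (hy i.le_succ) hs.aemeasurable
      (fun x _ => hs0 x) hlo
  have hsum := Finset.sum_le_sum fun i hi => hpiece i (Finset.mem_range.1 hi)
  rw [← integral_eq_sum_intervalIntegral (hy d.zero_le) hG hGout, ← Finset.sum_mul,
    Finset.sum_range_sub] at hsum
  rw [hellingerSq]
  linarith

end stepAverage

lemma AntitoneOn.exists_memSd_hellingerSq_le {s : ℝ → ℝ} {a b : ℝ} {d : ℕ} (hd : d ≠ 0)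
    (hs0 : ∀ x, 0 ≤ s x) (hs1 : ∫ x, s x = 1) (hanti : AntitoneOn s (Ici a)) (hab : a ≤ b)
    (hsupp : ∀ x ∉ Icc a b, s x = 0) :
    ∃ t, MemSd d t ∧ hellingerSq s t ≤ (b - a) * (s a - s b) / (4 * d ^ 2) := by
  have hsab : s b ≤ s a := hanti self_mem_Ici hab hab
  set L := √(s a)
  set l := √(s b)
  set Δ := (L - l) / d
  have hd' : (d : ℝ) ≠ 0 := Nat.cast_ne_zero.2 hd
  have hΔ : 0 ≤ Δ := div_nonneg (sub_nonneg.2 (Real.sqrt_le_sqrt hsab)) d.cast_nonneg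
  obtain ⟨y, hy, hy0, hyd, hlev⟩ := exists_monotone_levelPartition (g := fun x => √(s x))
    (c := fun i => L - i * Δ) hd hab
    (fun x hx z hz hxz => Real.sqrt_le_sqrt (hanti hx.1 hz.1 hxz))
    (fun i j hij => by dsimp only; gcongr) (by simp [L])
    (by simp only [Δ, L, l]; rw [mul_div_cancel₀ _ hd']; ring)
  rw [← hy0, ← hyd] at hsupp
  refine ⟨stepAverage s y d, memSd_stepAverage hy hs0 hs1 (hy0 ▸ hanti) hsupp, ?_⟩
  have hosc : ∀ i < d, ∃ lo, ∀ x ∈ Ioo (y i) (y (i + 1)), √(s x) ∈ Icc lo (lo + Δ) :=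
    fun i hi => ⟨L - (i + 1) * Δ, fun x hx => by
      have := hlev i hi x hx
      push_cast at this
      exact ⟨this.1, by linarith [this.2]⟩⟩
  calc hellingerSq s (stepAverage s y d)
      ≤ (y d - y 0) * Δ ^ 2 / 4 :=
        hellingerSq_stepAverage_le hy hs0 (.of_integral_ne_zero (by simp [hs1])) hsupp hosc
    _ = (b - a) * (L - l) ^ 2 / (4 * d ^ 2) := by simp only [hy0, hyd, Δ]; field_simp
    _ ≤ (b - a) * (s a - s b) / (4 * d ^ 2) := by
        gcongr
        exact sq_sqrt_sub_sqrt_le_sub (hs0 b) hsab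

lemma MemSM.exists_le_of_antitoneOn {M : ℝ} {s : ℝ → ℝ} {a : ℝ} (hs : MemSM M s)
    (hanti : AntitoneOn s (Ici a)) (hzero : ∀ x < a, s x = 0) :
    ∃ b, a ≤ b ∧ (∀ x ∉ Icc a b, s x = 0) ∧ (b - a) * (s a - s b) ≤ M := by
  obtain ⟨⟨hs0, hs1, -⟩, a', b, -, hsupp, hM⟩ := hs
  obtain ⟨x₀, hx₀⟩ : ∃ x, s x ≠ 0 := by
    by_contra! h
    simp [h] at hs1
  have hmax : ∀ x, s x ≤ s a := fun x => by
    rcases lt_or_ge x a with h | h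
    · rw [hzero x h]; exact hs0 a
    · exact hanti self_mem_Ici h h
  have haI : a ∈ Icc a' b := by
    by_contra h
    exact hx₀ (le_antisymm ((hmax x₀).trans_eq (hsupp a h)) (hs0 x₀))
  refine ⟨b, haI.2, fun x hx => (lt_or_ge x a).elim (hzero x) fun h =>
    hsupp x fun h' => hx ⟨h, h'.2⟩, le_trans ?_ hM⟩
  have hsup : s a ≤ sSup (s '' Icc a' b) :=
    le_csSup ⟨s a, forall_mem_image.2 fun x _ => hmax x⟩ (mem_image_of_mem s haI)
  have hinf : sInf (s '' Icc a' b) ≤ s b :=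
    csInf_le ⟨0, forall_mem_image.2 fun x _ => hs0 x⟩
      (mem_image_of_mem s ⟨haI.1.trans haI.2, le_rfl⟩)
  exact mul_le_mul (by linarith [haI.1]) (by linarith) (by linarith [hmax b])
    (by linarith [haI.1, haI.2])

lemma MemSM.exists_memSd_hellingerSq_le_of_antitoneOn {M : ℝ} {s : ℝ → ℝ} {a : ℝ} {d : ℕ}
    (hs : MemSM M s) (hd : d ≠ 0) (hanti : AntitoneOn s (Ici a)) (hzero : ∀ x < a, s x = 0) :
    ∃ t, MemSd d t ∧ hellingerSq s t ≤ M / (4 * d ^ 2) := by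
  obtain ⟨b, hab, hsupp, hM⟩ := hs.exists_le_of_antitoneOn hanti hzero
  obtain ⟨t, ht, hst⟩ := hanti.exists_memSd_hellingerSq_le hd hs.1.1 hs.1.2.1 hab hsupp
  exact ⟨t, ht, hst.trans (by gcongr)⟩

lemma MemSM.exists_memSd_hellingerSq_le {M : ℝ} {s : ℝ → ℝ} {d : ℕ} (hs : MemSM M s)
    (hd : d ≠ 0) : ∃ t, MemSd d t ∧ hellingerSq s t ≤ M / (4 * d ^ 2) := by
  obtain ⟨-, -, a, (⟨hanti, hzero⟩ | ⟨hmono, hzero⟩)⟩ := hs.1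
  · exact hs.exists_memSd_hellingerSq_le_of_antitoneOn hd hanti hzero
  · obtain ⟨t, ht, hst⟩ := hs.comp_neg.exists_memSd_hellingerSq_le_of_antitoneOn hd (a := -a)
      (by simpa using hmono.comp_neg) fun x hx => hzero _ (by linarith)
    refine ⟨fun x => t (-x), ht.comp_neg, ?_⟩
    have := hellingerSq_comp_neg (fun x => s (-x)) t
    simp only [neg_neg] at this
    rwa [this]

theorem hellinger_approximation_of_SM_by_Sd
    (M : ℝ) (s : ℝ → ℝ) (hs : MemSM M s) (d : ℕ) (hd : 1 ≤ d) :
    sInf {r : ℝ | ∃ t, MemSd d t ∧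
        r = (1/2) * ∫ x : ℝ, (Real.sqrt (s x) - Real.sqrt (t x)) ^ 2} ≤
      min (M / (4 * (d : ℝ) ^ 2)) 1 := by
  obtain ⟨t, ht, hst⟩ := hs.exists_memSd_hellingerSq_le (Nat.one_le_iff_ne_zero.1 hd)
  have hbdd : 0 ∈ lowerBounds {r : ℝ | ∃ t, MemSd d t ∧
      r = (1/2) * ∫ x : ℝ, (Real.sqrt (s x) - Real.sqrt (t x)) ^ 2} := by
    rintro r ⟨t, -, rfl⟩
    exact hellingerSq_nonneg s t
  refine (csInf_le ⟨0, hbdd⟩ ⟨t, ht, rfl⟩).trans (le_min hst ?_)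
  exact hellingerSq_le_one hs.1.1 ht.1.1 hs.1.2.1 ht.1.2.1
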